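/- Let 1 < r ≤ 2 and let α₁, α₂, b₁, b₂ ≥ 0 satisfy α₁ + α₂ > 2/r and b₁ + b₂ > 1/r. Then there is a constant C such that ‖uv‖_{H^r_{0,0}} ≤ C ‖u‖_{H^r_{α₁,b₁}} ‖v‖_{H^r_{α₂,b₂}} for all Schwartz functions u, v on ℝ^{1+2}. -/

import Mathlib

noncomputable section
open MeasureTheory Real
open scoped ENNReal NNReal FourierTransform

/-- Space-time `ℝ^{1+2}`: coordinate `0` is time, coordinates `1,2` are space. -/
abbrev SpaceTime : Type := EuclideanSpace ℝ (Fin 3)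

/-- Japanese bracket `⟨t⟩ = (1+t²)^{1/2}`. -/
def jap (t : ℝ) : ℝ := (1 + t ^ 2) ^ ((1 : ℝ) / 2)

/-- The norm `|ξ|` of the spatial part of a space-time frequency. -/
def spNorm (z : SpaceTime) : ℝ := Real.sqrt (z 1 ^ 2 + z 2 ^ 2)

/-- The dual exponent `r' = r/(r-1)` as an extended nonnegative real. -/
def dualExp (r : ℝ) : ℝ≥0∞ := ENNReal.ofReal (r / (r - 1))

/-- The wave-Sobolev norm `‖u‖_{H^r_{s,b}} = ‖⟨ξ⟩^s ⟨|τ|-|ξ|⟩^b ũ(τ,ξ)‖_{L^{r'}}`. -/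
def HNorm (r s b : ℝ) (u : SpaceTime → ℂ) : ℝ≥0∞ :=
  eLpNorm (fun z => ((jap (spNorm z) ^ s * jap (|z 0| - spNorm z) ^ b : ℝ) : ℂ) *
    𝓕 u z) (dualExp r) volume

/-- `‖u‖_{X^r_{s,b,±}} = ‖⟨ξ⟩^s ⟨τ ± |ξ|⟩^b ũ(τ,ξ)‖_{L^{r'}}`, with `sgn = ±1`. -/
def XNorm (r s b sgn : ℝ) (u : SpaceTime → ℂ) : ℝ≥0∞ :=
  eLpNorm (fun z => ((jap (spNorm z) ^ s * jap (z 0 + sgn * spNorm z) ^ b : ℝ) : ℂ) *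
    𝓕 u z) (dualExp r) volume

/-!
On the Fourier side `uv` becomes the convolution `ũ ⋆ ṽ`. Writing `ũ(η) ṽ(ζ - η)` as
`(w₁(η) w₂(ζ - η))⁻¹ · (w₁ ũ)(η) (w₂ ṽ)(ζ - η)` with the weights `wᵢ = ⟨ξ⟩^αᵢ ⟨|τ| - |ξ|⟩^bᵢ`,
Hölder's inequality in `η` followed by Fubini in `(ζ, η)` reduces the estimate to the uniform
kernel bound `sup_ζ ∫ (w₁(η) w₂(ζ - η))^(-r) dη < ∞`. In coordinates `η = (τ, ξ)` this kernel
integral is dominated by a convolution of `⟨·⟩^(-rαᵢ)` over `ℝ²`, finite since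
`r(α₁ + α₂) > 2`, times a convolution of `⟨|τ| - ·⟩^(-rbᵢ)` over `ℝ`, finite since
`r(b₁ + b₂) > 1`. Both reduce to `⟨x⟩^(-a) ⟨y⟩^(-b) ≤ ⟨x⟩^(-(a+b)) + ⟨y⟩^(-(a+b))`.
-/

lemma Real.rpow_neg_mul_rpow_neg_le_add {x y a b : ℝ} (hx : 0 < x) (hy : 0 < y) (ha : 0 ≤ a)
    (hb : 0 ≤ b) : x ^ (-a) * y ^ (-b) ≤ x ^ (-(a + b)) + y ^ (-(a + b)) := by
  rcases le_total x y with hxy | hxy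
  · calc x ^ (-a) * y ^ (-b) ≤ x ^ (-a) * x ^ (-b) := by
          gcongr ?_ * ?_; exact Real.rpow_le_rpow_of_nonpos hx hxy (neg_nonpos.2 hb)
      _ = x ^ (-(a + b)) := by rw [← Real.rpow_add hx, neg_add]
      _ ≤ _ := le_add_of_nonneg_right (by positivity)
  · calc x ^ (-a) * y ^ (-b) ≤ y ^ (-a) * y ^ (-b) := by
          gcongr ?_ * ?_; exact Real.rpow_le_rpow_of_nonpos hy hxy (neg_nonpos.2 ha)
      _ = y ^ (-(a + b)) := by rw [← Real.rpow_add hy, neg_add]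
      _ ≤ _ := le_add_of_nonneg_left (by positivity)

lemma jap_pos (t : ℝ) : 0 < jap t := by unfold jap; positivity

lemma jap_neg (t : ℝ) : jap (-t) = jap t := by simp [jap]

lemma jap_abs (t : ℝ) : jap |t| = jap t := by simp [jap]

@[fun_prop]
lemma continuous_jap : Continuous jap := by unfold jap; fun_prop (disch := positivity)

@[fun_prop]
lemma Continuous.jap_rpow {X : Type*} [TopologicalSpace X] {f : X → ℝ} (hf : Continuous f)
    (a : ℝ) : Continuous fun x => jap (f x) ^ a :=
  (continuous_jap.comp hf).rpow_const fun _ => Or.inl (jap_pos _).ne'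

lemma jap_rpow_neg (t β : ℝ) : jap t ^ (-β) = (1 + t ^ 2) ^ (-β / 2) := by
  rw [jap, ← Real.rpow_mul (by positivity)]
  ring_nf

lemma jap_abs_sub_rpow_neg_le (t a β : ℝ) :
    jap (|t| - a) ^ (-β) ≤ jap (t - a) ^ (-β) + jap (t + a) ^ (-β) := by
  have := jap_pos (t - a); have := jap_pos (t + a)
  rcases le_total 0 t with ht | ht
  · rw [abs_of_nonneg ht]
    exact le_add_of_nonneg_right (by positivity)
  · rw [abs_of_nonpos ht, ← neg_add', jap_neg]
    exact le_add_of_nonneg_left (by positivity)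

lemma lintegral_jap_norm_rpow_neg_lt_top {E : Type*} [NormedAddCommGroup E]
    [InnerProductSpace ℝ E] [FiniteDimensional ℝ E] [MeasurableSpace E] [BorelSpace E]
    {μ : Measure E} [μ.IsAddHaarMeasure] {β : ℝ} (hβ : (Module.finrank ℝ E : ℝ) < β) :
    ∫⁻ x, ENNReal.ofReal (jap ‖x‖ ^ (-β)) ∂μ < ∞ := by
  simp_rw [jap_rpow_neg]
  exact (integrable_rpow_neg_one_add_norm_sq hβ).lintegral_lt_top

lemma lintegral_jap_norm_sub_mul_le {E : Type*} [NormedAddCommGroup E] [MeasurableSpace E]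
    [BorelSpace E] {μ : Measure E} [μ.IsAddRightInvariant] {β₁ β₂ : ℝ} (hβ₁ : 0 ≤ β₁)
    (hβ₂ : 0 ≤ β₂) (p q : E) :
    ∫⁻ x, ENNReal.ofReal (jap ‖x - p‖ ^ (-β₁)) * ENNReal.ofReal (jap ‖x - q‖ ^ (-β₂)) ∂μ ≤
      2 * ∫⁻ x, ENNReal.ofReal (jap ‖x‖ ^ (-(β₁ + β₂))) ∂μ := by
  calc ∫⁻ x, ENNReal.ofReal (jap ‖x - p‖ ^ (-β₁)) * ENNReal.ofReal (jap ‖x - q‖ ^ (-β₂)) ∂μ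
      ≤ ∫⁻ x, ENNReal.ofReal (jap ‖x - p‖ ^ (-(β₁ + β₂))) +
          ENNReal.ofReal (jap ‖x - q‖ ^ (-(β₁ + β₂))) ∂μ := by
        refine lintegral_mono fun x => ?_
        have := jap_pos ‖x - p‖; have := jap_pos ‖x - q‖
        rw [← ENNReal.ofReal_mul (by positivity),
          ← ENNReal.ofReal_add (by positivity) (by positivity)]
        exact ENNReal.ofReal_le_ofReal
          (Real.rpow_neg_mul_rpow_neg_le_add (jap_pos _) (jap_pos _) hβ₁ hβ₂)
    _ = 2 * ∫⁻ x, ENNReal.ofReal (jap ‖x‖ ^ (-(β₁ + β₂))) ∂μ := by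
        rw [lintegral_add_left (by fun_prop), two_mul]
        simp_rw [lintegral_sub_right_eq_self (fun x => ENNReal.ofReal (jap ‖x‖ ^ (-(β₁ + β₂))))]

lemma lintegral_jap_abs_sub_mul_le {β₁ β₂ : ℝ} (hβ₁ : 0 ≤ β₁) (hβ₂ : 0 ≤ β₂) (a c d : ℝ) :
    ∫⁻ τ, ENNReal.ofReal (jap (|τ| - a) ^ (-β₁)) * ENNReal.ofReal (jap (|c - τ| - d) ^ (-β₂)) ≤
      8 * ∫⁻ t : ℝ, ENNReal.ofReal (jap ‖t‖ ^ (-(β₁ + β₂))) := by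
  set I := ∫⁻ t : ℝ, ENNReal.ofReal (jap ‖t‖ ^ (-(β₁ + β₂)))
  set J : ℝ → ℝ → ℝ → ℝ≥0∞ := fun β p τ => ENNReal.ofReal (jap ‖τ - p‖ ^ (-β))
  have hJ (β t a : ℝ) : ENNReal.ofReal (jap (|t| - a) ^ (-β)) ≤ J β a t + J β (-a) t := by
    have := jap_pos (t - a); have := jap_pos (t + a)
    simp only [J, Real.norm_eq_abs, jap_abs, sub_neg_eq_add]
    rw [← ENNReal.ofReal_add (by positivity) (by positivity)]
    exact ENNReal.ofReal_le_ofReal (jap_abs_sub_rpow_neg_le t a β)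
  have hJ₂ (τ : ℝ) : ENNReal.ofReal (jap (|c - τ| - d) ^ (-β₂)) ≤
      J β₂ (c + d) τ + J β₂ (c - d) τ := by
    simpa only [J, abs_sub_comm c, sub_sub, sub_neg_eq_add, sub_add] using hJ β₂ (τ - c) d
  have hpair (p q : ℝ) : ∫⁻ τ, J β₁ p τ * J β₂ q τ ≤ 2 * I :=
    lintegral_jap_norm_sub_mul_le hβ₁ hβ₂ p q
  calc _ ≤ ∫⁻ τ, (J β₁ a τ + J β₁ (-a) τ) * (J β₂ (c + d) τ + J β₂ (c - d) τ) :=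
        lintegral_mono fun τ => mul_le_mul' (hJ β₁ τ a) (hJ₂ τ)
    _ = (∫⁻ τ, J β₁ a τ * J β₂ (c + d) τ) + (∫⁻ τ, J β₁ (-a) τ * J β₂ (c + d) τ) +
          ((∫⁻ τ, J β₁ a τ * J β₂ (c - d) τ) + ∫⁻ τ, J β₁ (-a) τ * J β₂ (c - d) τ) := by
        simp only [add_mul, mul_add]
        rw [lintegral_add_left (by fun_prop), lintegral_add_left (by fun_prop),
          lintegral_add_left (by fun_prop)]
    _ ≤ 2 * I + 2 * I + (2 * I + 2 * I) := by gcongr <;> exact hpair _ _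
    _ = 8 * I := by ring

theorem ENNReal.lintegral_le_Lp_inv_mul_Lq_mul {α : Type*} [MeasurableSpace α] {μ : Measure α}
    {p q : ℝ} (hpq : p.HolderConjugate q) {W F : α → ℝ≥0∞} (hW : AEMeasurable W μ)
    (hF : AEMeasurable F μ) (hW0 : ∀ x, W x ≠ 0) (hWtop : ∀ x, W x ≠ ∞) :
    ∫⁻ x, F x ∂μ ≤ (∫⁻ x, (W x)⁻¹ ^ p ∂μ) ^ (1 / p) * (∫⁻ x, (W x * F x) ^ q ∂μ) ^ (1 / q) := by
  calc ∫⁻ x, F x ∂μ = ∫⁻ x, ((fun x => (W x)⁻¹) * fun x => W x * F x) x ∂μ := by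
        congr with x
        rw [Pi.mul_apply, ← mul_assoc, ENNReal.inv_mul_cancel (hW0 x) (hWtop x), one_mul]
    _ ≤ _ := ENNReal.lintegral_mul_le_Lp_mul_Lq μ hpq hW.inv (hW.mul hF)

section Convolution

variable {G : Type*} [AddGroup G] [MeasurableSpace G] [MeasurableAdd₂ G] [MeasurableNeg G]
  {μ : Measure G} [SFinite μ] [μ.IsAddRightInvariant]

theorem lintegral_lintegral_mul_sub {f g : G → ℝ≥0∞} (hf : Measurable f) (hg : Measurable g) :
    ∫⁻ ζ, ∫⁻ η, f η * g (ζ - η) ∂μ ∂μ = (∫⁻ x, f x ∂μ) * ∫⁻ x, g x ∂μ := by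
  rw [lintegral_lintegral_swap (by fun_prop)]
  calc ∫⁻ η, ∫⁻ ζ, f η * g (ζ - η) ∂μ ∂μ = ∫⁻ η, f η * ∫⁻ ζ, g (ζ - η) ∂μ ∂μ := by
        congr with η
        exact lintegral_const_mul _ (by fun_prop)
    _ = (∫⁻ x, f x ∂μ) * ∫⁻ x, g x ∂μ := by
        simp_rw [lintegral_sub_right_eq_self]
        exact lintegral_mul_const _ hf

theorem eLpNorm_lintegral_mul_sub_le {p q : ℝ} (hpq : p.HolderConjugate q)
    {W₁ W₂ F₁ F₂ : G → ℝ≥0∞} (hW₁ : Measurable W₁) (hW₂ : Measurable W₂)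
    (hF₁ : Measurable F₁) (hF₂ : Measurable F₂) (hW₁0 : ∀ x, W₁ x ≠ 0) (hW₂0 : ∀ x, W₂ x ≠ 0)
    (hW₁top : ∀ x, W₁ x ≠ ∞) (hW₂top : ∀ x, W₂ x ≠ ∞) {K : ℝ≥0∞}
    (hK : ∀ ζ, ∫⁻ η, (W₁ η * W₂ (ζ - η))⁻¹ ^ p ∂μ ≤ K) :
    eLpNorm (fun ζ => ∫⁻ η, F₁ η * F₂ (ζ - η) ∂μ) (.ofReal q) μ ≤
      K ^ (1 / p) * eLpNorm (fun x => W₁ x * F₁ x) (.ofReal q) μ *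
        eLpNorm (fun x => W₂ x * F₂ x) (.ofReal q) μ := by
  have hq : 0 < q := hpq.symm.pos
  have hp : 0 < p := hpq.pos
  simp only [eLpNorm_eq_lintegral_rpow_enorm_toReal (ENNReal.ofReal_pos.2 hq).ne'
    ENNReal.ofReal_ne_top, ENNReal.toReal_ofReal hq.le, enorm_eq_self]
  set H₁ := fun x => W₁ x * F₁ x
  set H₂ := fun x => W₂ x * F₂ x
  have holder (ζ : G) : (∫⁻ η, F₁ η * F₂ (ζ - η) ∂μ) ^ q ≤
      K ^ (q / p) * ∫⁻ η, H₁ η ^ q * H₂ (ζ - η) ^ q ∂μ := by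
    have h := ENNReal.lintegral_le_Lp_inv_mul_Lq_mul hpq (μ := μ)
      (W := fun η => W₁ η * W₂ (ζ - η)) (F := fun η => F₁ η * F₂ (ζ - η)) (by fun_prop)
      (by fun_prop) (fun η => mul_ne_zero (hW₁0 η) (hW₂0 _))
      (fun η => ENNReal.mul_ne_top (hW₁top η) (hW₂top _))
    calc (∫⁻ η, F₁ η * F₂ (ζ - η) ∂μ) ^ q
        ≤ (K ^ (1 / p) * (∫⁻ η, (H₁ η * H₂ (ζ - η)) ^ q ∂μ) ^ (1 / q)) ^ q := by
          refine ENNReal.rpow_le_rpow (h.trans (mul_le_mul'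
            (ENNReal.rpow_le_rpow (hK ζ) (by positivity)) (le_of_eq ?_))) hq.le
          simp only [H₁, H₂, mul_mul_mul_comm]
      _ = K ^ (q / p) * ∫⁻ η, H₁ η ^ q * H₂ (ζ - η) ^ q ∂μ := by
          rw [ENNReal.mul_rpow_of_nonneg _ _ hq.le, ← ENNReal.rpow_mul, ← ENNReal.rpow_mul,
            one_div_mul_cancel hq.ne', ENNReal.rpow_one]
          simp_rw [ENNReal.mul_rpow_of_nonneg _ _ hq.le]
          ring_nf
  calc (∫⁻ ζ, (∫⁻ η, F₁ η * F₂ (ζ - η) ∂μ) ^ q ∂μ) ^ (1 / q)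
      ≤ (K ^ (q / p) * ((∫⁻ x, H₁ x ^ q ∂μ) * ∫⁻ x, H₂ x ^ q ∂μ)) ^ (1 / q) := by
        gcongr
        rw [← lintegral_lintegral_mul_sub (by fun_prop) (by fun_prop),
          ← lintegral_const_mul'' _ (Measurable.lintegral_prod_right'
            (f := fun z : G × G => H₁ z.2 ^ q * H₂ (z.1 - z.2) ^ q) (by fun_prop)).aemeasurable]
        exact lintegral_mono holder
    _ = _ := by
        rw [ENNReal.mul_rpow_of_nonneg _ _ (by positivity),
          ENNReal.mul_rpow_of_nonneg _ _ (by positivity), ← ENNReal.rpow_mul, ← mul_assoc]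
        congr 3
        field_simp

end Convolution

open Convolution in
theorem SchwartzMap.fourier_mul_eq_convolution {E : Type*} [NormedAddCommGroup E]
    [InnerProductSpace ℝ E] [FiniteDimensional ℝ E] [MeasurableSpace E] [BorelSpace E]
    (u v : SchwartzMap E ℂ) :
    𝓕 (fun x => u x * v x) = 𝓕 (u : E → ℂ) ⋆[ContinuousLinearMap.mul ℂ ℂ] 𝓕 (v : E → ℂ) := by
  have hneg (f : SchwartzMap E ℂ) (x : E) : 𝓕 (𝓕 f) (-x) = f x := by
    conv_rhs => rw [← FourierPair.fourierInv_fourier_eq (F := SchwartzMap E ℂ) f]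
    rfl
  -- `uv` is the inverse transform of the Schwartz convolution `h`, whose transform is `u(-·)v(-·)`
  set h : SchwartzMap E ℂ := convolution (ContinuousLinearMap.mul ℂ ℂ) (𝓕 u) (𝓕 v)
  have hprod : (fun x => u x * v x) = ⇑(𝓕⁻ h : SchwartzMap E ℂ) := by
    ext x
    change _ = 𝓕 h (-x)
    simp only [h, fourier_convolution, pairing_apply_apply, ContinuousLinearMap.mul_apply', hneg]
  have hconv : ⇑h = 𝓕 (u : E → ℂ) ⋆[ContinuousLinearMap.mul ℂ ℂ] 𝓕 (v : E → ℂ) := by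
    ext ζ
    rw [convolution_apply]; rfl
  rw [hprod, ← fourier_coe, FourierInvPair.fourier_fourierInv_eq, hconv]

/-- `(τ, ξ) ↦ (τ, ξ 0, ξ 1)`. -/
def timeSpaceEquiv : ℝ × EuclideanSpace ℝ (Fin 2) ≃ᵐ SpaceTime :=
  ((MeasurableEquiv.refl ℝ).prodCongr (MeasurableEquiv.toLp 2 (Fin 2 → ℝ)).symm).trans
    ((MeasurableEquiv.piFinSuccAbove (fun _ => ℝ) 0).symm.trans (MeasurableEquiv.toLp 2 _))

lemma measurePreserving_timeSpaceEquiv : MeasurePreserving timeSpaceEquiv := by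
  have hspace : MeasurePreserving
      ((MeasurableEquiv.refl ℝ).prodCongr (MeasurableEquiv.toLp 2 (Fin 2 → ℝ)).symm) := by
    rw [Measure.volume_eq_prod, Measure.volume_eq_prod]
    exact (MeasurePreserving.id volume).prod
      (EuclideanSpace.volume_preserving_symm_measurableEquiv_toLp (Fin 2))
  have hinsert :
      MeasurePreserving (MeasurableEquiv.piFinSuccAbove (fun _ : Fin 3 => ℝ) 0).symm := by
    rw [Measure.volume_eq_prod, volume_pi]
    exact (measurePreserving_piFinSuccAbove (fun _ : Fin 3 => (volume : Measure ℝ)) 0).symm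
  exact (EuclideanSpace.volume_preserving_symm_measurableEquiv_toLp (Fin 3)).symm.comp
    (hinsert.comp hspace)

lemma timeSpaceEquiv_apply_zero (τ : ℝ) (ξ : EuclideanSpace ℝ (Fin 2)) :
    timeSpaceEquiv (τ, ξ) 0 = τ := rfl

@[fun_prop]
lemma continuous_spNorm : Continuous spNorm := by unfold spNorm; fun_prop

lemma spNorm_timeSpaceEquiv (τ : ℝ) (ξ : EuclideanSpace ℝ (Fin 2)) :
    spNorm (timeSpaceEquiv (τ, ξ)) = ‖ξ‖ := by
  rw [EuclideanSpace.norm_eq, Fin.sum_univ_two, spNorm]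
  simp only [Real.norm_eq_abs, sq_abs]
  rfl

lemma timeSpaceEquiv_sub (p q : ℝ × EuclideanSpace ℝ (Fin 2)) :
    timeSpaceEquiv p - timeSpaceEquiv q = timeSpaceEquiv (p - q) := by
  ext j
  fin_cases j <;> rfl

lemma lintegral_spaceTime {f : SpaceTime → ℝ≥0∞} (hf : Measurable f) :
    ∫⁻ z, f z = ∫⁻ ξ : EuclideanSpace ℝ (Fin 2), ∫⁻ τ, f (timeSpaceEquiv (τ, ξ)) := by
  rw [← measurePreserving_timeSpaceEquiv.lintegral_comp hf, Measure.volume_eq_prod]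
  exact lintegral_prod_symm _ (hf.comp timeSpaceEquiv.measurable).aemeasurable

def waveWeight (s b : ℝ) (z : SpaceTime) : ℝ :=
  jap (spNorm z) ^ s * jap (|z 0| - spNorm z) ^ b

lemma waveWeight_pos (s b : ℝ) (z : SpaceTime) : 0 < waveWeight s b z := by
  have := jap_pos (spNorm z); have := jap_pos (|z 0| - spNorm z)
  unfold waveWeight; positivity

@[fun_prop]
lemma continuous_waveWeight (s b : ℝ) : Continuous (waveWeight s b) := by
  unfold waveWeight; fun_prop

lemma ofReal_waveWeight_inv_rpow {r : ℝ} (hr : 0 ≤ r) (s b : ℝ) (z : SpaceTime) :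
    (ENNReal.ofReal (waveWeight s b z))⁻¹ ^ r =
      ENNReal.ofReal (waveWeight (-(r * s)) (-(r * b)) z) := by
  have := jap_pos (spNorm z); have := jap_pos (|z 0| - spNorm z)
  rw [← ENNReal.ofReal_inv_of_pos (waveWeight_pos s b z),
    ENNReal.ofReal_rpow_of_nonneg (inv_nonneg.2 (waveWeight_pos s b z).le) hr]
  congr 1
  rw [waveWeight, waveWeight, mul_inv, ← Real.rpow_neg (by positivity),
    ← Real.rpow_neg (by positivity), Real.mul_rpow (by positivity) (by positivity),
    ← Real.rpow_mul (by positivity), ← Real.rpow_mul (by positivity)]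
  ring_nf

lemma ofReal_waveWeight_timeSpaceEquiv (s b τ : ℝ) (ξ : EuclideanSpace ℝ (Fin 2)) :
    ENNReal.ofReal (waveWeight s b (timeSpaceEquiv (τ, ξ))) =
      ENNReal.ofReal (jap ‖ξ‖ ^ s) * ENNReal.ofReal (jap (|τ| - ‖ξ‖) ^ b) := by
  have := jap_pos ‖ξ‖
  rw [waveWeight, spNorm_timeSpaceEquiv, timeSpaceEquiv_apply_zero,
    ENNReal.ofReal_mul (by positivity)]

lemma HNorm_eq_eLpNorm (r s b : ℝ) (u : SpaceTime → ℂ) :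
    HNorm r s b u =
      eLpNorm (fun z => ENNReal.ofReal (waveWeight s b z) * ‖𝓕 u z‖ₑ) (dualExp r) volume :=
  eLpNorm_congr_enorm_ae <| .of_forall fun z => by
    change ‖((waveWeight s b z : ℝ) : ℂ) * 𝓕 u z‖ₑ = _
    rw [enorm_mul, enorm_eq_nnnorm, Complex.nnnorm_real, ← enorm_eq_nnnorm,
      Real.enorm_of_nonneg (waveWeight_pos s b z).le, enorm_eq_self]

lemma lintegral_waveWeight_mul_waveWeight_sub_le {γ₁ γ₂ β₁ β₂ : ℝ} (hγ₁ : 0 ≤ γ₁)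
    (hγ₂ : 0 ≤ γ₂) (hβ₁ : 0 ≤ β₁) (hβ₂ : 0 ≤ β₂) (ζ : SpaceTime) :
    ∫⁻ η, ENNReal.ofReal (waveWeight (-γ₁) (-β₁) η) *
        ENNReal.ofReal (waveWeight (-γ₂) (-β₂) (ζ - η)) ≤
      (2 * ∫⁻ ξ : EuclideanSpace ℝ (Fin 2), ENNReal.ofReal (jap ‖ξ‖ ^ (-(γ₁ + γ₂)))) *
        (8 * ∫⁻ t : ℝ, ENNReal.ofReal (jap ‖t‖ ^ (-(β₁ + β₂)))) := by
  obtain ⟨⟨ζ₀, w⟩, rfl⟩ := timeSpaceEquiv.surjective ζ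
  set A : EuclideanSpace ℝ (Fin 2) → ℝ≥0∞ := fun ξ =>
    ENNReal.ofReal (jap ‖ξ‖ ^ (-γ₁)) * ENNReal.ofReal (jap ‖ξ - w‖ ^ (-γ₂))
  rw [lintegral_spaceTime (by fun_prop)]
  calc ∫⁻ ξ, ∫⁻ τ, ENNReal.ofReal (waveWeight (-γ₁) (-β₁) (timeSpaceEquiv (τ, ξ))) *
        ENNReal.ofReal (waveWeight (-γ₂) (-β₂) (timeSpaceEquiv (ζ₀, w) - timeSpaceEquiv (τ, ξ)))
      = ∫⁻ ξ, A ξ * ∫⁻ τ, ENNReal.ofReal (jap (|τ| - ‖ξ‖) ^ (-β₁)) *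
          ENNReal.ofReal (jap (|ζ₀ - τ| - ‖w - ξ‖) ^ (-β₂)) := by
        congr with ξ
        rw [← lintegral_const_mul' _ _ (by finiteness)]
        congr with τ
        simp only [timeSpaceEquiv_sub, Prod.mk_sub_mk, ofReal_waveWeight_timeSpaceEquiv,
          norm_sub_rev ξ w, A]
        ring
    _ ≤ ∫⁻ ξ, A ξ * (8 * ∫⁻ t : ℝ, ENNReal.ofReal (jap ‖t‖ ^ (-(β₁ + β₂)))) := by
        gcongr with ξ
        exact lintegral_jap_abs_sub_mul_le hβ₁ hβ₂ _ _ _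
    _ ≤ _ := by
        rw [lintegral_mul_const _ (by fun_prop)]
        gcongr
        simpa using lintegral_jap_norm_sub_mul_le hγ₁ hγ₂ 0 w

lemma exists_lintegral_waveWeight_inv_rpow_le {r α₁ α₂ b₁ b₂ : ℝ} (hr : 0 < r)
    (hα₁ : 0 ≤ α₁) (hα₂ : 0 ≤ α₂) (hb₁ : 0 ≤ b₁) (hb₂ : 0 ≤ b₂)
    (hα : 2 < r * (α₁ + α₂)) (hb : 1 < r * (b₁ + b₂)) :
    ∃ K : ℝ≥0∞, K ≠ ∞ ∧ ∀ ζ : SpaceTime, ∫⁻ η, (ENNReal.ofReal (waveWeight α₁ b₁ η) *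
      ENNReal.ofReal (waveWeight α₂ b₂ (ζ - η)))⁻¹ ^ r ≤ K := by
  rw [mul_add] at hα hb
  refine ⟨_, ?_, fun ζ => (le_of_eq ?_).trans (lintegral_waveWeight_mul_waveWeight_sub_le
    (γ₁ := r * α₁) (γ₂ := r * α₂) (β₁ := r * b₁) (β₂ := r * b₂)
    (by positivity) (by positivity) (by positivity) (by positivity) ζ)⟩
  · have h₂ := lintegral_jap_norm_rpow_neg_lt_top
      (μ := (volume : Measure (EuclideanSpace ℝ (Fin 2)))) (β := r * α₁ + r * α₂)
      (by simpa using hα)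
    have h₁ := lintegral_jap_norm_rpow_neg_lt_top (μ := (volume : Measure ℝ))
      (β := r * b₁ + r * b₂) (by simpa using hb)
    finiteness
  · simp_rw [ENNReal.mul_inv (.inr ENNReal.ofReal_ne_top) (.inl ENNReal.ofReal_ne_top),
      ENNReal.mul_rpow_of_nonneg _ _ hr.le, ofReal_waveWeight_inv_rpow hr.le]

lemma HNorm_zero_zero_mul_le (r : ℝ) (u v : SchwartzMap SpaceTime ℂ) :
    HNorm r 0 0 (fun z => u z * v z) ≤
      eLpNorm (fun ζ => ∫⁻ η, ‖𝓕 (u : SpaceTime → ℂ) η‖ₑ * ‖𝓕 (v : SpaceTime → ℂ) (ζ - η)‖ₑ)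
        (dualExp r) volume := by
  rw [HNorm_eq_eLpNorm]
  refine eLpNorm_mono_enorm fun ζ => ?_
  simp only [waveWeight, Real.rpow_zero, mul_one, ENNReal.ofReal_one, one_mul, enorm_eq_self,
    SchwartzMap.fourier_mul_eq_convolution, MeasureTheory.convolution_def,
    ContinuousLinearMap.mul_apply']
  exact (enorm_integral_le_lintegral_enorm _).trans_eq (by simp_rw [enorm_mul])

theorem bilinear_estimate_Sobolev_general (r α₁ α₂ b₁ b₂ : ℝ) (hr1 : 1 < r)
    (hα₁ : 0 ≤ α₁) (hα₂ : 0 ≤ α₂) (hb₁ : 0 ≤ b₁) (hb₂ : 0 ≤ b₂)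
    (hsum : 2 / r < α₁ + α₂) (hbsum : 1 / r < b₁ + b₂) :
    ∃ C : ℝ≥0, ∀ u v : SchwartzMap SpaceTime ℂ,
      HNorm r 0 0 (fun z => u z * v z) ≤
        C * HNorm r α₁ b₁ ⇑u * HNorm r α₂ b₂ ⇑v := by
  have hr : 0 < r := by linarith
  obtain ⟨K, hK_ne_top, hK⟩ := exists_lintegral_waveWeight_inv_rpow_le hr hα₁ hα₂ hb₁ hb₂
    (by rwa [div_lt_iff₀' hr] at hsum) (by rwa [div_lt_iff₀' hr] at hbsum)
  have hW_ne_zero (s b : ℝ) (z : SpaceTime) : ENNReal.ofReal (waveWeight s b z) ≠ 0 :=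
    (ENNReal.ofReal_pos.2 (waveWeight_pos s b z)).ne'
  have hF_meas (f : SchwartzMap SpaceTime ℂ) :
      Measurable fun z => ‖𝓕 (f : SpaceTime → ℂ) z‖ₑ := by
    rw [← SchwartzMap.fourier_coe]; exact (𝓕 f).continuous.enorm.measurable
  refine ⟨(K ^ (1 / r)).toNNReal, fun u v => ?_⟩
  rw [ENNReal.coe_toNNReal (by finiteness), HNorm_eq_eLpNorm r α₁, HNorm_eq_eLpNorm r α₂]
  -- `dualExp r` is by definition `.ofReal` of the Hölder conjugate `r.conjExponent` of `r`
  exact (HNorm_zero_zero_mul_le r u v).trans <|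
    eLpNorm_lintegral_mul_sub_le (.conjExponent hr1) (by fun_prop) (by fun_prop)
      (hF_meas u) (hF_meas v) (hW_ne_zero α₁ b₁) (hW_ne_zero α₂ b₂)
      (fun _ => ENNReal.ofReal_ne_top) (fun _ => ENNReal.ofReal_ne_top) hK

/-- Lemma 3.4: bilinear product estimate in Fourier-Lebesgue wave-Sobolev spaces. -/
theorem bilinear_estimate_Sobolev (r α₁ α₂ b₁ b₂ : ℝ) (hr1 : 1 < r) (hr2 : r ≤ 2)
    (hα₁ : 0 ≤ α₁) (hα₂ : 0 ≤ α₂) (hb₁ : 0 ≤ b₁) (hb₂ : 0 ≤ b₂)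
    (hsum : 2 / r < α₁ + α₂) (hbsum : 1 / r < b₁ + b₂) :
    ∃ C : ℝ≥0, ∀ u v : SchwartzMap SpaceTime ℂ,
      HNorm r 0 0 (fun z => u z * v z) ≤
        C * HNorm r α₁ b₁ ⇑u * HNorm r α₂ b₂ ⇑v :=
  bilinear_estimate_Sobolev_general r α₁ α₂ b₁ b₂ hr1 hα₁ hα₂ hb₁ hb₂ hsum hbsum
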